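/- arXiv:2303.00618 — 5 statements merged into one kernel-verified Lean document; each statement's English description precedes it below -/
import Mathlib

section
/- Let ψ : ℝ^N → ℂ^d be a map whose values are unit vectors, and suppose L > 0 is a Lipschitz bound of ψ with respect to the ∞-norm on ℝ^N, i.e. ‖ψ(ε) − ψ(ε′)‖₂ ≤ L·‖ε − ε′‖_∞ for all ε, ε′ ∈ ℝ^N. Then for any ε̄ ≥ 0 and any ε ∈ ℝ^N with ‖ε‖_∞ ≤ ε̄, it holds that |⟨ψ(ε), ψ(0)⟩| ≥ 1 − L²·ε̄²/2. -/
set_option autoImplicit false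

theorem re_inner_eq_one_sub_norm_sub_sq_div_two {𝕜 E : Type*} [RCLike 𝕜] [NormedAddCommGroup E]
    [InnerProductSpace 𝕜 E] {x y : E} (hx : ‖x‖ = 1) (hy : ‖y‖ = 1) :
    RCLike.re (inner 𝕜 x y) = 1 - ‖x - y‖ ^ 2 / 2 := by
  rw [@norm_sub_sq 𝕜, hx, hy]
  ring

theorem one_sub_sq_div_two_le_norm_inner_of_norm_sub_le {𝕜 E : Type*} [RCLike 𝕜]
    [NormedAddCommGroup E] [InnerProductSpace 𝕜 E] {x y : E} (hx : ‖x‖ = 1) (hy : ‖y‖ = 1)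
    {δ : ℝ} (hδ : ‖x - y‖ ≤ δ) :
    1 - δ ^ 2 / 2 ≤ ‖(inner 𝕜 x y : 𝕜)‖ :=
  calc 1 - δ ^ 2 / 2 ≤ 1 - ‖x - y‖ ^ 2 / 2 := by gcongr
    _ = RCLike.re (inner 𝕜 x y) := (re_inner_eq_one_sub_norm_sub_sq_div_two hx hy).symm
    _ ≤ ‖(inner 𝕜 x y : 𝕜)‖ := RCLike.re_le_norm _

theorem worst_case_fidelity_of_lipschitz_general {N d : ℕ}
    (ψ : (Fin N → ℝ) → EuclideanSpace ℂ (Fin d)) (hψ : ∀ ε, ‖ψ ε‖ = 1)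
    (L : ℝ) (hL : 0 < L)
    (hLip : ∀ ε ε' : Fin N → ℝ, ‖ψ ε - ψ ε'‖ ≤ L * ‖ε - ε'‖)
    (εbar : ℝ) (ε : Fin N → ℝ) (hε : ‖ε‖ ≤ εbar) :
    1 - L ^ 2 * εbar ^ 2 / 2 ≤ ‖(inner ℂ (ψ ε) (ψ 0) : ℂ)‖ := by
  have hdist : ‖ψ ε - ψ 0‖ ≤ L * εbar :=
    calc ‖ψ ε - ψ 0‖ ≤ L * ‖ε - 0‖ := hLip ε 0
      _ ≤ L * εbar := by rw [sub_zero]; gcongr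
  rw [← mul_pow]
  exact one_sub_sq_div_two_le_norm_inner_of_norm_sub_le (hψ ε) (hψ 0) hdist

/-- Theorem 1 of the paper: if `L > 0` is a Lipschitz bound of the unit-vector
valued map `ψ : ℝ^N → ℂ^d` (with the ∞-norm on `ℝ^N`, which is the default norm on `Fin N → ℝ`),
then for any `ε̄ ≥ 0` and any `ε` with `‖ε‖_∞ ≤ ε̄`, the fidelity `|⟨ψ(ε), ψ(0)⟩|` is at least
`1 − L²ε̄²/2`. -/
theorem worst_case_fidelity_of_lipschitz {N d : ℕ}
    (ψ : (Fin N → ℝ) → EuclideanSpace ℂ (Fin d)) (hψ : ∀ ε, ‖ψ ε‖ = 1)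
    (L : ℝ) (hL : 0 < L)
    (hLip : ∀ ε ε' : Fin N → ℝ, ‖ψ ε - ψ ε'‖ ≤ L * ‖ε - ε'‖)
    (εbar : ℝ) (hεbar : 0 ≤ εbar) (ε : Fin N → ℝ) (hε : ‖ε‖ ≤ εbar) :
    1 - L ^ 2 * εbar ^ 2 / 2 ≤ ‖(inner ℂ (ψ ε) (ψ 0) : ℂ)‖ :=
  worst_case_fidelity_of_lipschitz_general ψ hψ L hL hLip εbar ε hε
end

section
/- Let ψ : ℝ^N → ℂ^d be a map whose values are unit vectors, and suppose L > 0 is a Lipschitz bound of ψ with respect to the ∞-norm on ℝ^N, i.e. ‖ψ(ε) − ψ(ε′)‖₂ ≤ L·‖ε − ε′‖_∞ for all ε, ε′ ∈ ℝ^N. Let F ∈ [0, 1] and let ε̄ ≥ 0 satisfy ε̄ ≤ (√2 / L)·√(1 − F). Then for every ε ∈ ℝ^N with ‖ε‖_∞ ≤ ε̄ it holds that |⟨ψ(ε), ψ(0)⟩| ≥ F. -/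
/-! For unit vectors, `‖x - y‖² = 2 - 2 Re⟪x, y⟫`, so a distance at most `√(2(1 - F))`
forces `Re⟪x, y⟫ ≥ F`, and the fidelity `|⟪x, y⟫|` dominates its real part. The Lipschitz
bound turns `‖ε‖_∞ ≤ ε̄ ≤ (√2 / L) √(1 - F)` into exactly this distance bound between
`ψ ε` and `ψ 0`. -/

open RCLike

section UnitVectors

variable {𝕜 E : Type*} [RCLike 𝕜] [NormedAddCommGroup E] [InnerProductSpace 𝕜 E]
  {x y : E}

theorem norm_sub_sq_eq_two_sub_two_re_inner (hx : ‖x‖ = 1) (hy : ‖y‖ = 1) :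
    ‖x - y‖ ^ 2 = 2 - 2 * re (inner 𝕜 x y) := by
  rw [@norm_sub_sq 𝕜, hx, hy]
  ring

theorem le_norm_inner_of_norm_sub_sq_le {F : ℝ} (hx : ‖x‖ = 1) (hy : ‖y‖ = 1)
    (h : ‖x - y‖ ^ 2 ≤ 2 * (1 - F)) : F ≤ ‖(inner 𝕜 x y : 𝕜)‖ := by
  rw [norm_sub_sq_eq_two_sub_two_re_inner (𝕜 := 𝕜) hx hy] at h
  linarith [re_le_norm (inner 𝕜 x y : 𝕜)]

end UnitVectors

theorem noise_bound_for_prescribed_fidelity_general {N d : ℕ}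
    (ψ : (Fin N → ℝ) → EuclideanSpace ℂ (Fin d)) (hψ : ∀ ε, ‖ψ ε‖ = 1)
    (L : ℝ) (hL : 0 < L)
    (hLip : ∀ ε ε' : Fin N → ℝ, ‖ψ ε - ψ ε'‖ ≤ L * ‖ε - ε'‖)
    (F : ℝ) (hF1 : F ≤ 1)
    (εbar : ℝ) (hεbarF : εbar ≤ Real.sqrt 2 / L * Real.sqrt (1 - F))
    (ε : Fin N → ℝ) (hε : ‖ε‖ ≤ εbar) :
    F ≤ ‖(inner ℂ (ψ ε) (ψ 0) : ℂ)‖ := by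
  have hdist : ‖ψ ε - ψ 0‖ ≤ Real.sqrt (2 * (1 - F)) :=
    calc ‖ψ ε - ψ 0‖ ≤ L * ‖ε‖ := by simpa using hLip ε 0
      _ ≤ L * εbar := by gcongr
      _ ≤ L * (Real.sqrt 2 / L * Real.sqrt (1 - F)) := by gcongr
      _ = Real.sqrt (2 * (1 - F)) := by
        rw [Real.sqrt_mul zero_le_two]
        field_simp
  refine le_norm_inner_of_norm_sub_sq_le (hψ ε) (hψ 0) ?_
  exact (Real.le_sqrt (norm_nonneg _) (by linarith)).1 hdist

/-- converse formulation of Theorem 1 of the paper: if `L > 0` is a Lipschitz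
bound of the unit-vector valued map `ψ : ℝ^N → ℂ^d` (with the ∞-norm on `ℝ^N`, which is the
default norm on `Fin N → ℝ`), `F ∈ [0,1]` and `ε̄ ≥ 0` satisfies `ε̄ ≤ (√2/L)·√(1−F)`, then
every `ε` with `‖ε‖_∞ ≤ ε̄` yields fidelity `|⟨ψ(ε), ψ(0)⟩| ≥ F`. -/
theorem noise_bound_for_prescribed_fidelity {N d : ℕ}
    (ψ : (Fin N → ℝ) → EuclideanSpace ℂ (Fin d)) (hψ : ∀ ε, ‖ψ ε‖ = 1)
    (L : ℝ) (hL : 0 < L)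
    (hLip : ∀ ε ε' : Fin N → ℝ, ‖ψ ε - ψ ε'‖ ≤ L * ‖ε - ε'‖)
    (F : ℝ) (hF0 : 0 ≤ F) (hF1 : F ≤ 1)
    (εbar : ℝ) (hεbar : 0 ≤ εbar) (hεbarF : εbar ≤ Real.sqrt 2 / L * Real.sqrt (1 - F))
    (ε : Fin N → ℝ) (hε : ‖ε‖ ≤ εbar) :
    F ≤ ‖(inner ℂ (ψ ε) (ψ 0) : ℂ)‖ :=
  noise_bound_for_prescribed_fidelity_general ψ hψ L hL hLip F hF1 εbar hεbarF ε hε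
end

section
/- Let H₁, …, H_N be d×d complex Hermitian matrices, let ψ₀ ∈ ℂ^d be a unit vector, and for ε ∈ ℝ^N define the noisy circuit state ψ(ε) = exp(−i(1+ε₁)H₁)·exp(−i(1+ε₂)H₂)···exp(−i(1+ε_N)H_N)·ψ₀ (ordered matrix product applied to ψ₀), with ideal state ψ̂ = ψ(0). Then for any ε̄ ≥ 0 and any ε ∈ ℝ^N with ‖ε‖_∞ ≤ ε̄: |⟨ψ(ε), ψ̂⟩| ≥ 1 − (Σ_{i=1}^N ‖H_i‖₂)²·ε̄²/2. -/
set_option autoImplicit false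

open scoped Matrix

/-- The operator norm (induced 2-norm, i.e. maximum singular value) of a complex matrix. -/
noncomputable def opNorm {m n : Type*} [Fintype m] [Fintype n] [DecidableEq n]
    (A : Matrix m n ℂ) : ℝ :=
  ‖LinearMap.toContinuousLinearMap (Matrix.toEuclideanLin A)‖

/-- The noisy circuit state `ψ(ε) = exp(−i(1+ε₁)H₁) ⋯ exp(−i(1+ε_N)H_N) ψ₀`
(ordered matrix product applied to `ψ₀`). -/
noncomputable def circuitState {d N : ℕ} (H : Fin N → Matrix (Fin d) (Fin d) ℂ)
    (ψ₀ : EuclideanSpace ℂ (Fin d)) (ε : Fin N → ℝ) : EuclideanSpace ℂ (Fin d) :=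
  Matrix.toEuclideanLin
    (List.ofFn fun i => NormedSpace.exp ((-Complex.I * (1 + (ε i : ℂ))) • H i)).prod ψ₀

/-!
In the C⋆-algebra of matrices with the operator norm, each gate `exp(−i t H)` with `H` Hermitian
is unitary and `‖H‖`-Lipschitz in `t`: `t ↦ exp(−i t H)` has unitary values, so its derivative
`exp(−i t H) (−i H)` has norm `‖H‖`. Since multiplication by a unitary is isometric, telescoping
bounds the distance of two products of unitaries by the sum of the distances of their factors,
so `‖ψ(ε) − ψ̂‖ ≤ ε̄ Σᵢ ‖Hᵢ‖`. For unit vectors `‖u − v‖² = 2 − 2 Re⟨u, v⟩ ≥ 2 − 2 |⟨u, v⟩|`.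
-/

open NormedSpace Complex

section CStarAlgebra

variable {A : Type*} [CStarAlgebra A]

theorem norm_list_ofFn_prod_sub_le_of_mem_unitary {N : ℕ} {u v : Fin N → A}
    (hu : ∀ i, u i ∈ unitary A) (hv : ∀ i, v i ∈ unitary A) :
    ‖(List.ofFn u).prod - (List.ofFn v).prod‖ ≤ ∑ i, ‖u i - v i‖ := by
  induction N with
  | zero => simp
  | succ n ih =>
    have hPv : (List.ofFn fun i => v i.succ).prod ∈ unitary A :=
      Submonoid.list_prod_mem _ (List.forall_mem_ofFn_iff.2 fun i => hv i.succ)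
    rw [List.ofFn_succ, List.ofFn_succ, List.prod_cons, List.prod_cons, Fin.sum_univ_succ,
      ← sub_add_sub_cancel _ (u 0 * (List.ofFn fun i => v i.succ).prod), ← mul_sub, ← sub_mul,
      add_comm (‖u 0 - v 0‖)]
    refine (norm_add_le _ _).trans (add_le_add ?_ ?_)
    · rw [CStarRing.norm_mem_unitary_mul _ (hu 0)]
      exact ih (fun i => hu i.succ) (fun i => hv i.succ)
    · rw [CStarRing.norm_mul_mem_unitary _ hPv]

theorem norm_exp_sub_one_le_of_mem_skewAdjoint {b : A} (hb : b ∈ skewAdjoint A) :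
    ‖exp b - 1‖ ≤ ‖b‖ := by
  let : NormedAlgebra ℚ A := .restrictScalars ℚ ℂ A
  have hderiv (s : ℝ) : HasDerivAt (fun s : ℝ => exp (s • b)) (exp (s • b) * b) s :=
    hasDerivAt_exp_smul_const b s
  have hbound (s : ℝ) : ‖exp (s • b) * b‖ = ‖b‖ :=
    CStarRing.norm_mem_unitary_mul _
      (exp_mem_unitary_of_mem_skewAdjoint (skewAdjoint.smul_mem s hb))
  simpa using norm_image_sub_le_of_norm_deriv_le_segment_01'
    (fun s _ => (hderiv s).hasDerivWithinAt) (fun s _ => (hbound s).le)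

theorem IsSelfAdjoint.exp_neg_I_mul_smul_mem_unitary {a : A} (ha : IsSelfAdjoint a) (t : ℝ) :
    NormedSpace.exp ((-I * t) • a) ∈ unitary A :=
  let : NormedAlgebra ℚ A := .restrictScalars ℚ ℂ A
  exp_mem_unitary_of_mem_skewAdjoint <| ha.smul_mem_skewAdjoint <| by simp [skewAdjoint.mem_iff]

theorem IsSelfAdjoint.norm_exp_neg_I_mul_smul_sub_le {a : A} (ha : IsSelfAdjoint a) (s t : ℝ) :
    ‖NormedSpace.exp ((-I * s) • a) - NormedSpace.exp ((-I * t) • a)‖ ≤ |s - t| * ‖a‖ := by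
  let : NormedAlgebra ℚ A := .restrictScalars ℚ ℂ A
  have hsplit : NormedSpace.exp ((-I * s) • a) =
      NormedSpace.exp ((-I * t) • a) * NormedSpace.exp ((-I * ↑(s - t)) • a) := by
    rw [← exp_add_of_commute ((Commute.refl a).smul_left _ |>.smul_right _), ← add_smul]
    push_cast
    ring_nf
  rw [hsplit, ← mul_sub_one, CStarRing.norm_mem_unitary_mul _ (ha.exp_neg_I_mul_smul_mem_unitary t)]
  refine (norm_exp_sub_one_le_of_mem_skewAdjoint ?_).trans_eq ?_
  · exact ha.smul_mem_skewAdjoint (by simp [skewAdjoint.mem_iff])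
  · rw [norm_smul, norm_mul, norm_neg, norm_I, one_mul, norm_real, Real.norm_eq_abs]

theorem norm_list_ofFn_prod_exp_neg_I_mul_smul_sub_le {N : ℕ} {a : Fin N → A}
    (ha : ∀ i, IsSelfAdjoint (a i)) (s t : Fin N → ℝ) :
    ‖(List.ofFn fun i => exp ((-I * s i) • a i)).prod -
        (List.ofFn fun i => exp ((-I * t i) • a i)).prod‖ ≤ ∑ i, |s i - t i| * ‖a i‖ :=
  (norm_list_ofFn_prod_sub_le_of_mem_unitary
    (fun i => (ha i).exp_neg_I_mul_smul_mem_unitary _)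
    (fun i => (ha i).exp_neg_I_mul_smul_mem_unitary _)).trans <|
    Finset.sum_le_sum fun i _ => (ha i).norm_exp_neg_I_mul_smul_sub_le _ _

end CStarAlgebra

theorem one_sub_norm_sub_sq_div_two_le_norm_inner {𝕜 E : Type*} [RCLike 𝕜]
    [NormedAddCommGroup E] [InnerProductSpace 𝕜 E] {u v : E} (hu : ‖u‖ = 1) (hv : ‖v‖ = 1) :
    1 - ‖u - v‖ ^ 2 / 2 ≤ ‖(inner 𝕜 u v : 𝕜)‖ := by
  rw [@norm_sub_sq 𝕜, hu, hv]
  linarith [RCLike.re_le_norm (inner 𝕜 u v : 𝕜)]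

section Circuit

open scoped Matrix.Norms.L2Operator

variable {d N : ℕ} {H : Fin N → Matrix (Fin d) (Fin d) ℂ} (ψ₀ : EuclideanSpace ℂ (Fin d))

theorem circuitState_eq_toEuclideanCLM (ε : Fin N → ℝ) :
    circuitState H ψ₀ ε = Matrix.toEuclideanCLM (𝕜 := ℂ) (n := Fin d)
      (List.ofFn fun i => exp ((-I * ↑(1 + ε i)) • H i)).prod ψ₀ := by
  push_cast
  rfl

theorem norm_circuitState (hH : ∀ i, (H i).IsHermitian) (ε : Fin N → ℝ) :
    ‖circuitState H ψ₀ ε‖ = ‖ψ₀‖ := by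
  have hU : (List.ofFn fun i => exp ((-I * ↑(1 + ε i)) • H i)).prod ∈ unitary _ :=
    Submonoid.list_prod_mem _ (List.forall_mem_ofFn_iff.2 fun i =>
      (hH i).isSelfAdjoint.exp_neg_I_mul_smul_mem_unitary _)
  rw [circuitState_eq_toEuclideanCLM]
  exact ContinuousLinearMap.norm_map_of_mem_unitary (Unitary.map_mem _ hU) ψ₀

theorem norm_circuitState_sub_le (hH : ∀ i, (H i).IsHermitian) (ε δ : Fin N → ℝ) :
    ‖circuitState H ψ₀ ε - circuitState H ψ₀ δ‖ ≤ (∑ i, |ε i - δ i| * opNorm (H i)) * ‖ψ₀‖ := by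
  have key := norm_list_ofFn_prod_exp_neg_I_mul_smul_sub_le
    (fun i => (hH i).isSelfAdjoint) (1 + ε) (1 + δ)
  simp only [Pi.add_apply, Pi.one_apply, add_sub_add_left_eq_sub] at key
  rw [circuitState_eq_toEuclideanCLM, circuitState_eq_toEuclideanCLM, ← sub_apply, ← map_sub]
  exact (ContinuousLinearMap.le_opNorm _ ψ₀).trans (by gcongr; exact key)

end Circuit

theorem circuit_worst_case_fidelity_general {d N : ℕ} (H : Fin N → Matrix (Fin d) (Fin d) ℂ)
    (hH : ∀ i, (H i).IsHermitian)
    (ψ₀ : EuclideanSpace ℂ (Fin d)) (hψ₀ : ‖ψ₀‖ = 1)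
    (εbar : ℝ) (ε : Fin N → ℝ) (hε : ‖ε‖ ≤ εbar) :
    1 - (∑ i, opNorm (H i)) ^ 2 * εbar ^ 2 / 2 ≤
      ‖(inner ℂ (circuitState H ψ₀ ε) (circuitState H ψ₀ 0) : ℂ)‖ := by
  have hdist : ‖circuitState H ψ₀ ε - circuitState H ψ₀ 0‖ ≤ (∑ i, opNorm (H i)) * εbar := by
    refine (norm_circuitState_sub_le ψ₀ hH ε 0).trans ?_
    rw [hψ₀, mul_one, Finset.sum_mul]
    refine Finset.sum_le_sum fun i _ => ?_
    rw [Pi.zero_apply, sub_zero, mul_comm, ← Real.norm_eq_abs]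
    exact mul_le_mul_of_nonneg_left ((norm_le_pi_norm ε i).trans hε) (norm_nonneg _)
  have hunit (δ : Fin N → ℝ) : ‖circuitState H ψ₀ δ‖ = 1 := by
    rw [norm_circuitState ψ₀ hH, hψ₀]
  calc 1 - (∑ i, opNorm (H i)) ^ 2 * εbar ^ 2 / 2
      ≤ 1 - ‖circuitState H ψ₀ ε - circuitState H ψ₀ 0‖ ^ 2 / 2 := by rw [← mul_pow]; gcongr
    _ ≤ _ := one_sub_norm_sub_sq_div_two_le_norm_inner (hunit ε) (hunit 0)

/-- worst-case fidelity bound of Theorem 2 of the paper: for any `ε̄ ≥ 0` and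
any `ε` with `‖ε‖_∞ ≤ ε̄`, the fidelity between the noisy state `ψ(ε)` and the ideal state
`ψ̂ = ψ(0)` satisfies `|⟨ψ(ε), ψ̂⟩| ≥ 1 − (Σᵢ ‖Hᵢ‖₂)²·ε̄²/2`. -/
theorem circuit_worst_case_fidelity {d N : ℕ} (H : Fin N → Matrix (Fin d) (Fin d) ℂ)
    (hH : ∀ i, (H i).IsHermitian)
    (ψ₀ : EuclideanSpace ℂ (Fin d)) (hψ₀ : ‖ψ₀‖ = 1)
    (εbar : ℝ) (hεbar : 0 ≤ εbar) (ε : Fin N → ℝ) (hε : ‖ε‖ ≤ εbar) :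
    1 - (∑ i, opNorm (H i)) ^ 2 * εbar ^ 2 / 2 ≤
      ‖(inner ℂ (circuitState H ψ₀ ε) (circuitState H ψ₀ 0) : ℂ)‖ :=
  circuit_worst_case_fidelity_general H hH ψ₀ hψ₀ εbar ε hε
end

section
/- Let N = 2m be even, let H₁, …, H_N be d×d complex Hermitian matrices, let ψ₀ ∈ ℂ^d be a unit vector, and for ε ∈ ℝ^N define ψ(ε) = exp(−i(1+ε₁)H₁)···exp(−i(1+ε_N)H_N)·ψ₀ (ordered matrix product applied to ψ₀). Then √2·Σ_{i=1}^{m} ‖[H_{2i−1} H_{2i}]‖₂ is a Lipschitz bound of ψ with respect to the ∞-norm, i.e. for all ε, ε′ ∈ ℝ^N: ‖ψ(ε) − ψ(ε′)‖₂ ≤ √2·(Σ_{i=1}^{m} ‖[H_{2i−1} H_{2i}]‖₂)·‖ε − ε′‖_∞. -/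
set_option autoImplicit false

open scoped Matrix

/-!
Write `U_j(t) = exp(-i t H_j)`. Pairing consecutive gates, the circuit is a product of the
unitaries `U_{2i-1} U_{2i}`, and a product of unitaries moves by at most the sum of the moves of
its factors. For one pair, `U₁(s) U₂(t) - U₁(s') U₂(t')` has the norm of
`exp(-iδ₁H₁) exp(-iδ₂H₂) - 1` with `δ = (s - s', t - t')`; along the path
`r ↦ exp(-irδ₁H₁) exp(-irδ₂H₂)` the derivative is `-i(δ₁H₁ + δ₂H₂)` multiplied by unitaries on
both sides, so the mean value theorem bounds it by
`‖δ₁H₁ + δ₂H₂‖ = ‖[H₁ H₂] (δ₁ I; δ₂ I)‖ ≤ ‖[H₁ H₂]‖ ‖δ‖₂`, and `‖δ‖₂ ≤ √2 ‖δ‖_∞`.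
-/

open NormedSpace Complex

namespace CStarAlgebra

variable {A : Type*} [CStarAlgebra A]

theorem exp_mem_unitary {a : A} (ha : a ∈ skewAdjoint A) :
    exp a ∈ unitary A := by
  let +nondep : NormedAlgebra ℚ A := .restrictScalars ℚ ℂ A
  exact NormedSpace.exp_mem_unitary_of_mem_skewAdjoint ha

theorem norm_exp_mul_exp_sub_one_le {a b : A} (ha : a ∈ skewAdjoint A)
    (hb : b ∈ skewAdjoint A) : ‖exp a * exp b - 1‖ ≤ ‖a + b‖ := by
  have hderiv : ∀ t : ℝ, HasDerivAt (fun t : ℝ => exp (t • a) * exp (t • b))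
      (exp (t • a) * (a + b) * exp (t • b)) t := by
    intro t
    refine ((hasDerivAt_exp_smul_const a t).mul
      (hasDerivAt_exp_smul_const b t)).congr_deriv ?_
    rw [mul_add, add_mul, mul_assoc, mul_assoc, ((Commute.refl b).smul_left t).exp_left.eq]
  have hbound : ∀ t : ℝ, ‖exp (t • a) * (a + b) * exp (t • b)‖ ≤ ‖a + b‖ := fun t => by
    rw [CStarRing.norm_mul_mem_unitary _ (exp_mem_unitary (skewAdjoint.smul_mem t hb)),
      CStarRing.norm_mem_unitary_mul _ (exp_mem_unitary (skewAdjoint.smul_mem t ha))]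
  simpa using norm_image_sub_le_of_norm_deriv_le_segment'
    (fun t _ => (hderiv t).hasDerivWithinAt) (fun t _ => hbound t) 1
    (Set.right_mem_Icc.2 zero_le_one)

theorem norm_exp_mul_exp_sub_exp_mul_exp_le {a b a' b' : A} (ha : a ∈ skewAdjoint A)
    (hb : b ∈ skewAdjoint A) (ha' : a' ∈ skewAdjoint A) (hb' : b' ∈ skewAdjoint A)
    (haa' : Commute a a') (hbb' : Commute b b') :
    ‖exp a * exp b - exp a' * exp b'‖ ≤ ‖(a - a') + (b - b')‖ := by
  let +nondep : NormedAlgebra ℚ A := .restrictScalars ℚ ℂ A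
  have hexpa : exp a = exp a' * exp (a - a') := by
    rw [← exp_add_of_commute (haa'.symm.sub_right (Commute.refl a')), add_sub_cancel]
  have hexpb : exp b = exp (b - b') * exp b' := by
    rw [← exp_add_of_commute (hbb'.sub_left (Commute.refl b')), sub_add_cancel]
  have hfactor : exp a * exp b - exp a' * exp b' =
      exp a' * (exp (a - a') * exp (b - b') - 1) * exp b' := by
    rw [hexpa, hexpb]
    noncomm_ring
  rw [hfactor, CStarRing.norm_mul_mem_unitary _ (exp_mem_unitary hb'),
    CStarRing.norm_mem_unitary_mul _ (exp_mem_unitary ha')]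
  exact norm_exp_mul_exp_sub_one_le (sub_mem ha ha') (sub_mem hb hb')

theorem norm_prod_ofFn_sub_prod_ofFn_le {n : ℕ} {u v : Fin n → A} (hu : ∀ i, u i ∈ unitary A)
    (hv : ∀ i, v i ∈ unitary A) :
    ‖(List.ofFn u).prod - (List.ofFn v).prod‖ ≤ ∑ i, ‖u i - v i‖ := by
  induction n with
  | zero => simp
  | succ n ih =>
    simp only [List.ofFn_succ, List.prod_cons, Fin.sum_univ_succ]
    have hprod : (List.ofFn fun i => u i.succ).prod ∈ unitary A :=
      list_prod_mem (by simpa using fun i : Fin n => hu i.succ)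
    calc _ = ‖(u 0 - v 0) * (List.ofFn fun i => u i.succ).prod +
          v 0 * ((List.ofFn fun i => u i.succ).prod - (List.ofFn fun i => v i.succ).prod)‖ := by
          noncomm_ring
      _ ≤ _ := (norm_add_le _ _).trans <| by
          rw [CStarRing.norm_mul_mem_unitary _ hprod, CStarRing.norm_mem_unitary_mul _ (hv 0)]
          gcongr
          exact ih (fun i => hu _) (fun i => hv _)

end CStarAlgebra

open CStarAlgebra

section TimeEvolution

variable {A : Type*} [CStarAlgebra A]

noncomputable def timeEvolution (h : A) (t : ℝ) : A := exp ((-(I * t)) • h)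

protected theorem IsSelfAdjoint.neg_I_mul_smul_mem_skewAdjoint {h : A} (hh : IsSelfAdjoint h)
    (t : ℝ) : (-(I * t)) • h ∈ skewAdjoint A :=
  hh.smul_mem_skewAdjoint (by simp [skewAdjoint.mem_iff])

theorem timeEvolution_mem_unitary {h : A} (hh : IsSelfAdjoint h) (t : ℝ) :
    timeEvolution h t ∈ unitary A :=
  exp_mem_unitary (hh.neg_I_mul_smul_mem_skewAdjoint t)

theorem norm_timeEvolution_mul_timeEvolution_sub_le {h k : A} (hh : IsSelfAdjoint h)
    (hk : IsSelfAdjoint k) (s t s' t' : ℝ) :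
    ‖timeEvolution h s * timeEvolution k t - timeEvolution h s' * timeEvolution k t'‖ ≤
      ‖(s - s') • h + (t - t') • k‖ := by
  refine (norm_exp_mul_exp_sub_exp_mul_exp_le (hh.neg_I_mul_smul_mem_skewAdjoint s)
    (hk.neg_I_mul_smul_mem_skewAdjoint t) (hh.neg_I_mul_smul_mem_skewAdjoint s')
    (hk.neg_I_mul_smul_mem_skewAdjoint t') ((Commute.refl h).smul_left _ |>.smul_right _)
    ((Commute.refl k).smul_left _ |>.smul_right _)).trans_eq ?_
  have hdiff : (-(I * s) - -(I * s')) • h + (-(I * t) - -(I * t')) • k =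
      (-I) • (((s - s' : ℝ) : ℂ) • h + ((t - t' : ℝ) : ℂ) • k) := by
    push_cast
    module
  rw [← sub_smul, ← sub_smul, hdiff, norm_smul, norm_neg, norm_I, one_mul, coe_smul, coe_smul]

end TimeEvolution

theorem List.prod_ofFn_two_mul {M : Type*} [Monoid M] {m : ℕ} (f : Fin (2 * m) → M) :
    (List.ofFn f).prod = (List.ofFn fun i : Fin m =>
      f ⟨2 * i, by omega⟩ * f ⟨2 * i + 1, by omega⟩).prod := by
  rw [List.ofFn_mul', List.prod_flatten, List.map_ofFn]
  congr 1
  simp [List.ofFn_succ, Function.comp_def]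

theorem Real.sqrt_sq_add_sq_le_sqrt_two_mul {x y c : ℝ} (hx : |x| ≤ c) (hy : |y| ≤ c) :
    √(x ^ 2 + y ^ 2) ≤ √2 * c := by
  have hc : 0 ≤ c := (abs_nonneg x).trans hx
  rw [← Real.sqrt_sq hc, ← Real.sqrt_mul zero_le_two]
  refine Real.sqrt_le_sqrt ?_
  nlinarith [sq_abs x, sq_abs y, abs_nonneg x, abs_nonneg y]

section L2OpNorm

open scoped Matrix.Norms.L2Operator
open Matrix

variable {m n : Type*} [Fintype m] [Fintype n] [DecidableEq n]

theorem Matrix.norm_toEuclideanLin_apply_le (M : Matrix m n ℂ) (x : EuclideanSpace ℂ n) :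
    ‖toEuclideanLin M x‖ ≤ ‖M‖ * ‖x‖ :=
  M.l2_opNorm_mulVec x

theorem Matrix.norm_fromRows_smul_one_smul_one_le (s t : ℝ) :
    ‖fromRows (s • 1 : Matrix n n ℂ) (t • 1 : Matrix n n ℂ)‖ ≤ √(s ^ 2 + t ^ 2) := by
  set R := fromRows (s • 1 : Matrix n n ℂ) (t • 1 : Matrix n n ℂ)
  have hRR : Rᴴ * R = diagonal fun _ => ((s ^ 2 + t ^ 2 : ℝ) : ℂ) := by
    rw [conjTranspose_fromRows_eq_fromCols_conjTranspose, fromCols_mul_fromRows]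
    ext i j
    by_cases hij : i = j <;> simp [hij, sq]
  refine Real.le_sqrt_of_sq_le ?_
  calc ‖R‖ ^ 2 = ‖Rᴴ * R‖ := by rw [l2_opNorm_conjTranspose_mul_self, sq]
    _ ≤ s ^ 2 + t ^ 2 := by
      rw [hRR, l2_opNorm_diagonal]
      refine (pi_norm_const_le _).trans_eq ?_
      rw [Complex.norm_real, Real.norm_of_nonneg (by positivity)]

theorem Matrix.norm_smul_add_smul_le_opNorm_fromCols (H₁ H₂ : Matrix m n ℂ) (s t : ℝ) :
    ‖s • H₁ + t • H₂‖ ≤ opNorm (fromCols H₁ H₂) * √(s ^ 2 + t ^ 2) := by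
  have hfactor : s • H₁ + t • H₂ =
      fromCols H₁ H₂ * fromRows (s • 1 : Matrix n n ℂ) (t • 1 : Matrix n n ℂ) := by
    rw [fromCols_mul_fromRows, Matrix.mul_smul, Matrix.mul_smul, Matrix.mul_one, Matrix.mul_one]
  rw [hfactor]
  exact (l2_opNorm_mul _ _).trans
    (mul_le_mul_of_nonneg_left (norm_fromRows_smul_one_smul_one_le s t) (norm_nonneg _))

theorem circuitState_eq_toEuclideanLin {d N : ℕ} (H : Fin N → Matrix (Fin d) (Fin d) ℂ)
    (ψ₀ : EuclideanSpace ℂ (Fin d)) (ε : Fin N → ℝ) :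
    circuitState H ψ₀ ε =
      toEuclideanLin (List.ofFn fun i => timeEvolution (H i) (1 + ε i)).prod ψ₀ := by
  unfold circuitState timeEvolution
  congr
  funext i
  push_cast
  ring_nf

end L2OpNorm

/-- even-N case of Theorem 3 of the paper: for `N = 2m`, the quantity
`√2·Σ_{i=1}^{m} ‖[H_{2i−1} H_{2i}]‖₂` is a Lipschitz bound of `ψ` w.r.t. the ∞-norm,
where `[H₁ H₂]` is the horizontal concatenation `Matrix.fromColumns H₁ H₂`. -/
theorem pairwise_lipschitz_bound_even {d m N : ℕ} (hN : N = 2 * m)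
    (H : Fin N → Matrix (Fin d) (Fin d) ℂ) (hH : ∀ i, (H i).IsHermitian)
    (ψ₀ : EuclideanSpace ℂ (Fin d)) (hψ₀ : ‖ψ₀‖ = 1) (ε ε' : Fin N → ℝ) :
    ‖circuitState H ψ₀ ε - circuitState H ψ₀ ε'‖ ≤
      Real.sqrt 2 *
        (∑ i : Fin m, opNorm (Matrix.fromCols
          (H ⟨2 * (i : ℕ), by have := i.isLt; omega⟩)
          (H ⟨2 * (i : ℕ) + 1, by have := i.isLt; omega⟩))) * ‖ε - ε'‖ := by
  open scoped Matrix.Norms.L2Operator in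
  · subst hN
    set U : (Fin (2 * m) → ℝ) → Fin (2 * m) → Matrix (Fin d) (Fin d) ℂ :=
      fun ε i => timeEvolution (H i) (1 + ε i)
    have hU : ∀ ε i, U ε i ∈ unitary _ := fun ε i =>
      timeEvolution_mem_unitary (hH i).isSelfAdjoint _
    have hδ : ∀ i, |ε i - ε' i| ≤ ‖ε - ε'‖ := fun i => norm_le_pi_norm (ε - ε') i
    rw [circuitState_eq_toEuclideanLin, circuitState_eq_toEuclideanLin, ← LinearMap.sub_apply,
      ← map_sub]
    calc _ ≤ ‖(List.ofFn (U ε)).prod - (List.ofFn (U ε')).prod‖ * ‖ψ₀‖ :=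
          Matrix.norm_toEuclideanLin_apply_le _ _
      _ = ‖(List.ofFn (U ε)).prod - (List.ofFn (U ε')).prod‖ := by rw [hψ₀, mul_one]
      _ ≤ _ := by
          rw [List.prod_ofFn_two_mul, List.prod_ofFn_two_mul]
          exact norm_prod_ofFn_sub_prod_ofFn_le (fun i => mul_mem (hU ε _) (hU ε _))
            (fun i => mul_mem (hU ε' _) (hU ε' _))
      _ ≤ _ := Finset.sum_le_sum fun i _ =>
          norm_timeEvolution_mul_timeEvolution_sub_le (hH _).isSelfAdjoint (hH _).isSelfAdjoint
          _ _ _ _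
      _ ≤ _ := Finset.sum_le_sum fun i _ => Matrix.norm_smul_add_smul_le_opNorm_fromCols _ _ _ _
      _ ≤ ∑ i : Fin m, opNorm (Matrix.fromCols
            (H ⟨2 * (i : ℕ), by have := i.isLt; omega⟩)
            (H ⟨2 * (i : ℕ) + 1, by have := i.isLt; omega⟩)) * (√2 * ‖ε - ε'‖) := by
          gcongr with i
          · exact norm_nonneg _
          · simp only [add_sub_add_left_eq_sub]
            exact Real.sqrt_sq_add_sq_le_sqrt_two_mul (hδ _) (hδ _)
      _ = _ := by rw [← Finset.sum_mul]; ring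
end

section
/- Let H be a d×d complex Hermitian matrix, let ε̄ ≥ 0 satisfy ‖H‖₂·ε̄ ≤ π/2, and let ψ₀ ∈ ℂ^d be a unit vector. Then for every ε ∈ ℝ with |ε| ≤ ε̄: |⟨exp(−i(1+ε)H)·ψ₀, exp(−iH)·ψ₀⟩| ≥ cos(‖H‖₂·ε̄). -/
/-!
Writing `U s = exp (-i s H)`, unitarity gives `⟨U (1 + ε) ψ₀, U 1 ψ₀⟩ = ⟨ψ₀, exp (i ε H) ψ₀⟩`.
If `cⱼ` are the coordinates of `ψ₀` in an orthonormal eigenbasis of `H` with eigenvalues `μⱼ`,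
this is `∑ⱼ e^{i ε μⱼ} |cⱼ|²` with `∑ⱼ |cⱼ|² = 1`, so its real part is a convex combination of
the numbers `cos (ε μⱼ)`. Since `|ε μⱼ| ≤ ‖H‖₂ ε̄ ≤ π`, each of them is at least `cos (‖H‖₂ ε̄)`.
-/

set_option autoImplicit false

open scoped Matrix

open scoped InnerProductSpace

open NormedSpace

theorem Real.cos_le_cos_of_abs_le {x θ : ℝ} (hx : |x| ≤ θ) (hθ : θ ≤ Real.pi) : cos θ ≤ cos x := by
  rw [← cos_abs x]
  exact cos_le_cos_of_nonneg_of_le_pi (abs_nonneg x) hθ hx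

theorem OrthonormalBasis.inner_self_apply_eq_sum {𝕜 E ι : Type*} [RCLike 𝕜] [NormedAddCommGroup E]
    [InnerProductSpace 𝕜 E] [Fintype ι] (b : OrthonormalBasis ι 𝕜 E) {T : E →ₗ[𝕜] E} {z : ι → 𝕜}
    (hT : ∀ j, T (b j) = z j • b j) (x : E) :
    ⟪x, T x⟫_𝕜 = ∑ j, z j * ((‖⟪b j, x⟫_𝕜‖ ^ 2 : ℝ) : 𝕜) := by
  nth_rw 2 [← b.sum_repr' x]
  simp only [map_sum, map_smul, hT, inner_sum, inner_smul_right, smul_smul]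
  refine Finset.sum_congr rfl fun j _ => ?_
  rw [← inner_conj_symm x (b j), mul_right_comm, RCLike.mul_conj]
  push_cast
  ring

namespace Matrix

open scoped Norms.Operator in
theorem exp_mulVec_of_mulVec_eq_smul {𝕂 n : Type*} [RCLike 𝕂] [Fintype n] [DecidableEq n]
    {A : Matrix n n 𝕂} {v : n → 𝕂} {c : 𝕂} (hv : A *ᵥ v = c • v) :
    exp A *ᵥ v = exp c • v := by
  have hpow (k : ℕ) : A ^ k *ᵥ v = c ^ k • v := by
    induction k with
    | zero => simp
    | succ k ih => rw [pow_succ', ← mulVec_mulVec, ih, mulVec_smul, hv, smul_smul, pow_succ]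
  have hA := (exp_series_hasSum_exp' (𝕂 := 𝕂) A).map (mulVec.addMonoidHomLeft v)
    (continuous_id.matrix_mulVec continuous_const)
  have hc := (exp_series_hasSum_exp' (𝕂 := 𝕂) c).smul_const v
  refine hA.unique ?_
  simpa [Function.comp_def, mulVec.addMonoidHomLeft, smul_mulVec, hpow, smul_smul] using hc

namespace IsHermitian

variable {n : Type*} [Fintype n] [DecidableEq n] {H : Matrix n n ℂ} (hH : H.IsHermitian)
include hH

theorem toEuclideanLin_eigenvectorBasis (j : n) :
    toEuclideanLin H (hH.eigenvectorBasis j) = (hH.eigenvalues j : ℂ) • hH.eigenvectorBasis j :=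
  WithLp.ofLp_injective 2 <|
    (hH.mulVec_eigenvectorBasis j).trans (RCLike.real_smul_eq_coe_smul _ _)

theorem toEuclideanLin_exp_smul_eigenvectorBasis (s : ℂ) (j : n) :
    toEuclideanLin (NormedSpace.exp (s • H)) (hH.eigenvectorBasis j) =
      Complex.exp (s * hH.eigenvalues j) • hH.eigenvectorBasis j := by
  have heig : (s • H) *ᵥ ⇑(hH.eigenvectorBasis j) =
      (s * hH.eigenvalues j) • ⇑(hH.eigenvectorBasis j) := by
    rw [smul_mulVec, ← smul_smul]
    exact congrArg (s • WithLp.ofLp ·) (hH.toEuclideanLin_eigenvectorBasis j)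
  rw [Complex.exp_eq_exp_ℂ]
  exact WithLp.ofLp_injective 2 (exp_mulVec_of_mulVec_eq_smul heig)

theorem abs_eigenvalues_le_opNorm (j : n) : |hH.eigenvalues j| ≤ opNorm H := by
  have h := (LinearMap.toContinuousLinearMap (toEuclideanLin H)).le_opNorm (hH.eigenvectorBasis j)
  rw [LinearMap.coe_toContinuousLinearMap', hH.toEuclideanLin_eigenvectorBasis, norm_smul,
    hH.eigenvectorBasis.orthonormal.1 j, Complex.norm_real, Real.norm_eq_abs, mul_one,
    mul_one] at h
  exact h

theorem inner_toEuclideanLin_exp_smul (s t : ℝ) (ψ : EuclideanSpace ℂ n) :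
    ⟪toEuclideanLin (NormedSpace.exp ((-Complex.I * s) • H)) ψ,
      toEuclideanLin (NormedSpace.exp ((-Complex.I * t) • H)) ψ⟫_ℂ =
      ⟪ψ, toEuclideanLin (NormedSpace.exp ((Complex.I * (s - t)) • H)) ψ⟫_ℂ := by
  have hstar : (NormedSpace.exp ((Complex.I * s) • H))ᴴ =
      NormedSpace.exp ((-Complex.I * s) • H) := by
    rw [← exp_conjTranspose, conjTranspose_smul, hH.eq]
    simp
  have hsum : (Complex.I * s) • H + (-Complex.I * t) • H = (Complex.I * (s - t)) • H := by
    rw [← add_smul]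
    ring_nf
  rw [← hstar, toEuclideanLin_conjTranspose_eq_adjoint, LinearMap.adjoint_inner_left,
    ← LinearMap.comp_apply, ← toLpLin_mul_same, ← exp_add_of_commute, hsum]
  exact ((Commute.refl H).smul_left _).smul_right _

theorem cos_le_re_inner_toEuclideanLin_exp_smul {ψ : EuclideanSpace ℂ n} (hψ : ‖ψ‖ = 1)
    {t θ : ℝ} (ht : opNorm H * |t| ≤ θ) (hθ : θ ≤ Real.pi) :
    Real.cos θ ≤ (⟪ψ, toEuclideanLin (NormedSpace.exp ((Complex.I * t) • H)) ψ⟫_ℂ).re := by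
  set b := hH.eigenvectorBasis
  have hcos (j : n) : Real.cos θ ≤ Real.cos (t * hH.eigenvalues j) := by
    refine Real.cos_le_cos_of_abs_le ?_ hθ
    rw [abs_mul, mul_comm]
    exact (mul_le_mul_of_nonneg_right (hH.abs_eigenvalues_le_opNorm j) (abs_nonneg t)).trans ht
  rw [b.inner_self_apply_eq_sum (hH.toEuclideanLin_exp_smul_eigenvectorBasis _), Complex.re_sum]
  calc Real.cos θ = ∑ j, ‖⟪b j, ψ⟫_ℂ‖ ^ 2 * Real.cos θ := by
        rw [← Finset.sum_mul, b.sum_sq_norm_inner_right, hψ, one_pow, one_mul]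
    _ ≤ ∑ j, ‖⟪b j, ψ⟫_ℂ‖ ^ 2 * Real.cos (t * hH.eigenvalues j) := by
        gcongr with j
        exact hcos j
    _ = _ := by
        refine Finset.sum_congr rfl fun j _ => ?_
        have harg :
            Complex.I * t * hH.eigenvalues j = ((t * hH.eigenvalues j : ℝ) : ℂ) * Complex.I := by
          push_cast
          ring
        rw [← RCLike.re_to_complex, RCLike.re_mul_ofReal, RCLike.re_to_complex, harg,
          Complex.exp_ofReal_mul_I_re, mul_comm]

end IsHermitian

end Matrix

theorem single_gate_cos_fidelity_bound_general {d : ℕ} (H : Matrix (Fin d) (Fin d) ℂ)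
    (hH : H.IsHermitian) (εbar : ℝ) (hsmall : opNorm H * εbar ≤ Real.pi / 2)
    (ψ₀ : EuclideanSpace ℂ (Fin d)) (hψ₀ : ‖ψ₀‖ = 1) (ε : ℝ) (hε : |ε| ≤ εbar) :
    Real.cos (opNorm H * εbar) ≤
      ‖(inner ℂ
        (Matrix.toEuclideanLin (NormedSpace.exp ((-Complex.I * (1 + (ε : ℂ))) • H)) ψ₀)
        (Matrix.toEuclideanLin (NormedSpace.exp ((-Complex.I) • H)) ψ₀) : ℂ)‖ := by
  have hfidelity := hH.inner_toEuclideanLin_exp_smul (1 + ε) 1 ψ₀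
  push_cast at hfidelity
  rw [mul_one, add_sub_cancel_left] at hfidelity
  rw [hfidelity]
  have hθ : opNorm H * εbar ≤ Real.pi := hsmall.trans (by linarith [Real.pi_pos])
  exact (hH.cos_le_re_inner_toEuclideanLin_exp_smul hψ₀
    (mul_le_mul_of_nonneg_left hε (norm_nonneg _)) hθ).trans (Complex.re_le_norm _)

/-- single-gate cosine fidelity bound, Appendix C of the paper: for a Hermitian
matrix `H`, `ε̄ ≥ 0` with `‖H‖₂·ε̄ ≤ π/2`, a unit vector `ψ₀` and any `ε` with `|ε| ≤ ε̄`, the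
fidelity `|⟨exp(−i(1+ε)H)ψ₀, exp(−iH)ψ₀⟩|` is at least `cos(‖H‖₂·ε̄)`. -/
theorem single_gate_cos_fidelity_bound {d : ℕ} (H : Matrix (Fin d) (Fin d) ℂ)
    (hH : H.IsHermitian) (εbar : ℝ) (hεbar : 0 ≤ εbar) (hsmall : opNorm H * εbar ≤ Real.pi / 2)
    (ψ₀ : EuclideanSpace ℂ (Fin d)) (hψ₀ : ‖ψ₀‖ = 1) (ε : ℝ) (hε : |ε| ≤ εbar) :
    Real.cos (opNorm H * εbar) ≤
      ‖(inner ℂ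
        (Matrix.toEuclideanLin (NormedSpace.exp ((-Complex.I * (1 + (ε : ℂ))) • H)) ψ₀)
        (Matrix.toEuclideanLin (NormedSpace.exp ((-Complex.I) • H)) ψ₀) : ℂ)‖ :=
  single_gate_cos_fidelity_bound_general H hH εbar hsmall ψ₀ hψ₀ ε hε
end
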